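/- Let H be a real Hilbert space, V_1,…,V_N closed subspaces of H, and suppose κ ≥ 2 is a constant such that d(x, V_I ∩ V_J) ≤ κ·max(d(x, V_I), d(x, V_J)) for all I, J ⊆ {1,…,N} and all x ∈ H. Let (i_n)_{n≥0} be any sequence in {1,…,N}, (λ_n)_{n≥0} any sequence in [0,2], x_0 ∈ H, and define the trajectory x_{n+1} := P_{i_n,λ_n}(x_n); set I_n := {i_k : 0 ≤ k ≤ n}. Fix n ≥ 0 and suppose that for some ε with 0 ≤ ε < κ^{−|I_n|}, one has θ_{V_{i_k}}(x_k) ≤ ε for all 0 ≤ k ≤ n. Then either x_0 = 0 or x_0 ∉ (V_{I_n})^⊥. -/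

import Mathlib

open Metric

noncomputable def relaxProj {H : Type*} [NormedAddCommGroup H] [InnerProductSpace ℝ H]
    (V : Submodule ℝ H) [V.HasOrthogonalProjection] (l : ℝ) (x : H) : H :=
  (1 - l) • x + l • (V.orthogonalProjectionOnto x : H)

/-- The relative distance function `θ_V(x) = d(x,V)/‖x‖` (with `θ_V(0) = 0`). -/
noncomputable def relDist {H : Type*} [NormedAddCommGroup H] [InnerProductSpace ℝ H]
    (V : Submodule ℝ H) (x : H) : ℝ :=
  infDist x (V : Set H) / ‖x‖

/-!
Suppose `x₀ ≠ 0` and `x₀ ⊥ W := V_{I_n}`. Each relaxed projection onto some `V_{i_k} ⊇ W`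
moves its argument only by a vector of `V_{i_k}ᗮ ⊆ Wᗮ`, so the whole trajectory stays in `Wᗮ`;
since `θ_{V_{i_k}}(x_k) ≤ ε < 1/2`, it also never reaches `0`. Hence `θ_W(x_n) = 1`.
On the other hand a relaxed projection onto `V ⊇ V_I` does not increase `θ_{V_I}`, and each time a
new index enters `I_k` the regularity inequality costs one factor `κ`; thus
`κ θ_{V_{I_k}}(x_k) ≤ κ^{|I_k|} ε`, and for `k = n` this gives `κ ≤ κ^{|I_n|} ε < 1`.
-/

open Submodule

section Distance
variable {H : Type*} [NormedAddCommGroup H] [InnerProductSpace ℝ H]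

theorem infDist_eq_norm_sub_starProjection (K : Submodule ℝ H) [K.HasOrthogonalProjection]
    (x : H) : infDist x (K : Set H) = ‖x - K.starProjection x‖ := by
  rw [infDist_eq_iInf, starProjection_minimal]
  simp only [dist_eq_norm]
  rfl

theorem norm_sq_eq_norm_sq_starProjection_add_infDist_sq (K : Submodule ℝ H)
    [K.HasOrthogonalProjection] (x : H) :
    ‖x‖ ^ 2 = ‖K.starProjection x‖ ^ 2 + infDist x (K : Set H) ^ 2 := by
  rw [norm_sq_eq_add_norm_sq_starProjection x K, starProjection_orthogonal_val,
    infDist_eq_norm_sub_starProjection]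

theorem relDist_mul_norm (K : Submodule ℝ H) (x : H) :
    relDist K x * ‖x‖ = infDist x (K : Set H) := by
  rcases eq_or_ne x 0 with rfl | hx
  · simp [infDist_zero_of_mem K.zero_mem]
  · exact div_mul_cancel₀ _ (norm_ne_zero_iff.mpr hx)

theorem relDist_le_iff {K : Submodule ℝ H} {x : H} {c : ℝ} (hc : 0 ≤ c) :
    relDist K x ≤ c ↔ infDist x (K : Set H) ≤ c * ‖x‖ := by
  rcases eq_or_ne x 0 with rfl | hx
  · simp [relDist, hc, infDist_zero_of_mem K.zero_mem]
  · rw [relDist, div_le_iff₀ (norm_pos_iff.mpr hx)]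

theorem relDist_eq_one_of_mem_orthogonal {K : Submodule ℝ H} [K.HasOrthogonalProjection] {x : H}
    (hxK : x ∈ Kᗮ) (hx : x ≠ 0) : relDist K x = 1 := by
  rw [relDist, infDist_eq_norm_sub_starProjection, (starProjection_apply_eq_zero_iff K).mpr hxK,
    sub_zero, div_self (norm_ne_zero_iff.mpr hx)]

theorem relDist_inf_le {A B : Submodule ℝ H} {x : H} {κ : ℝ} (hκ : 0 ≤ κ)
    (h : infDist x ((A ⊓ B : Submodule ℝ H) : Set H) ≤
      κ * max (infDist x (A : Set H)) (infDist x (B : Set H))) :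
    relDist (A ⊓ B) x ≤ κ * max (relDist A x) (relDist B x) := by
  have hmax : 0 ≤ max (relDist A x) (relDist B x) :=
    le_max_of_le_left (div_nonneg infDist_nonneg (norm_nonneg x))
  rwa [relDist_le_iff (mul_nonneg hκ hmax), mul_assoc, max_mul_of_nonneg _ _ (norm_nonneg x),
    relDist_mul_norm, relDist_mul_norm]

end Distance

section RelaxedProjection
variable {H : Type*} [NormedAddCommGroup H] [InnerProductSpace ℝ H]
  {V W : Submodule ℝ H} [V.HasOrthogonalProjection] {l : ℝ} {x : H}

theorem relaxProj_eq_sub_smul (l : ℝ) (x : H) :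
    relaxProj V l x = x - l • (x - V.starProjection x) := by
  rw [relaxProj, ← starProjection_apply]
  module

theorem relaxProj_eq_convex_reflection (l : ℝ) (x : H) :
    relaxProj V l x = (1 - l / 2) • x + (l / 2) • V.reflection x := by
  rw [relaxProj_eq_sub_smul, reflection_apply]
  module

theorem norm_relaxProj_le (hl : l ∈ Set.Icc (0 : ℝ) 2) (x : H) : ‖relaxProj V l x‖ ≤ ‖x‖ := by
  obtain ⟨hl0, hl2⟩ := hl
  calc ‖relaxProj V l x‖ ≤ (1 - l / 2) * ‖x‖ + l / 2 * ‖V.reflection x‖ := by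
        rw [relaxProj_eq_convex_reflection]
        refine (norm_add_le _ _).trans_eq ?_
        rw [norm_smul, norm_smul, Real.norm_of_nonneg (by linarith),
          Real.norm_of_nonneg (by linarith)]
    _ = ‖x‖ := by rw [LinearIsometryEquiv.norm_map]; ring

theorem relaxProj_sub_of_mem {p : H} (hp : p ∈ V) (l : ℝ) (x : H) :
    relaxProj V l x - p = relaxProj V l (x - p) := by
  simp only [relaxProj_eq_sub_smul, map_sub, starProjection_eq_self_iff.mpr hp]
  module

theorem relaxProj_sub_self_mem_orthogonal (l : ℝ) (x : H) : relaxProj V l x - x ∈ Vᗮ := by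
  have h : relaxProj V l x - x = -(l • (x - V.starProjection x)) := by
    rw [relaxProj_eq_sub_smul]
    abel
  rw [h]
  exact Vᗮ.neg_mem (Vᗮ.smul_mem l (sub_starProjection_mem_orthogonal x))

theorem relaxProj_mem_orthogonal (hWV : W ≤ V) (l : ℝ) (hx : x ∈ Wᗮ) : relaxProj V l x ∈ Wᗮ := by
  simpa using Wᗮ.add_mem hx (orthogonal_le hWV (relaxProj_sub_self_mem_orthogonal (V := V) l x))

theorem starProjection_relaxProj_of_le [W.HasOrthogonalProjection] (hWV : W ≤ V) (l : ℝ) (x : H) :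
    W.starProjection (relaxProj V l x) = W.starProjection x := by
  rw [← sub_eq_zero, ← map_sub, starProjection_apply_eq_zero_iff]
  exact orthogonal_le hWV (relaxProj_sub_self_mem_orthogonal l x)

theorem relaxProj_ne_zero (hl : l ∈ Set.Icc (0 : ℝ) 2) (hx : x ≠ 0) (hV : relDist V x < 1 / 2) :
    relaxProj V l x ≠ 0 := by
  rw [relaxProj_eq_sub_smul, sub_ne_zero]
  intro h
  have hd : 0 ≤ relDist V x * ‖x‖ := relDist_mul_norm V x ▸ infDist_nonneg
  have hnorm : ‖x‖ = l * (relDist V x * ‖x‖) := by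
    conv_lhs => rw [h]
    rw [norm_smul, Real.norm_of_nonneg hl.1, relDist_mul_norm, infDist_eq_norm_sub_starProjection]
  nlinarith [mul_le_mul_of_nonneg_right hl.2 hd, norm_pos_iff.mpr hx]

-- The component of `x` in `W` is untouched while its distance to `W` can only shrink.
theorem relDist_relaxProj_le [W.HasOrthogonalProjection] (hWV : W ≤ V)
    (hl : l ∈ Set.Icc (0 : ℝ) 2) (x : H) : relDist W (relaxProj V l x) ≤ relDist W x := by
  set y := relaxProj V l x
  have hP : W.starProjection y = W.starProjection x := starProjection_relaxProj_of_le hWV l x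
  have hdist : infDist y (W : Set H) ≤ infDist x (W : Set H) := by
    rw [infDist_eq_norm_sub_starProjection, infDist_eq_norm_sub_starProjection, hP,
      relaxProj_sub_of_mem (hWV (W.starProjection_apply_mem x))]
    exact norm_relaxProj_le hl _
  have hy := norm_sq_eq_norm_sq_starProjection_add_infDist_sq W y
  have hx := norm_sq_eq_norm_sq_starProjection_add_infDist_sq W x
  rw [hP] at hy
  rcases eq_or_ne y 0 with hy0 | hy0
  · rw [relDist, hy0, norm_zero, div_zero]
    exact div_nonneg infDist_nonneg (norm_nonneg x)
  have hypos : 0 < ‖y‖ := norm_pos_iff.mpr hy0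
  have hxpos : 0 < ‖x‖ := hypos.trans_le (norm_relaxProj_le hl x)
  rw [relDist, relDist, div_le_div_iff₀ hypos hxpos]
  refine (pow_le_pow_iff_left₀ (mul_nonneg infDist_nonneg (norm_nonneg _))
    (mul_nonneg infDist_nonneg (norm_nonneg _)) two_ne_zero).mp ?_
  rw [mul_pow, mul_pow, hx, hy]
  nlinarith [pow_le_pow_left₀ infDist_nonneg hdist 2, sq_nonneg ‖W.starProjection x‖]

end RelaxedProjection

instance Submodule.completeSpace_iInf {H : Type*} [NormedAddCommGroup H] [InnerProductSpace ℝ H]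
    [CompleteSpace H] {ι : Sort*} (V : ι → Submodule ℝ H) [∀ j, CompleteSpace (V j)] :
    CompleteSpace (⨅ j, V j : Submodule ℝ H) := by
  have hclosed : IsClosed ((⨅ j, V j : Submodule ℝ H) : Set H) := by
    rw [coe_iInf]
    exact isClosed_iInter fun j => (completeSpace_coe_iff_isComplete.mp inferInstance).isClosed
  exact hclosed.completeSpace_coe

section Trajectory
variable {H : Type*} [NormedAddCommGroup H] [InnerProductSpace ℝ H] {ι : Type*}
  {V : ι → Submodule ℝ H} [∀ j, CompleteSpace (V j)] {i : ℕ → ι} {lam : ℕ → ℝ}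
  {x : ℕ → H} {n : ℕ}

theorem trajectory_mem_orthogonal (hx : ∀ k, x (k + 1) = relaxProj (V (i k)) (lam k) (x k))
    {W : Submodule ℝ H} (hW : ∀ k < n, W ≤ V (i k)) (h0 : x 0 ∈ Wᗮ) : x n ∈ Wᗮ := by
  induction n with
  | zero => exact h0
  | succ n ih =>
    rw [hx]
    exact relaxProj_mem_orthogonal (hW n n.lt_succ_self) _ (ih fun k hk => hW k (by omega))

theorem trajectory_ne_zero (hx : ∀ k, x (k + 1) = relaxProj (V (i k)) (lam k) (x k))
    (hlam : ∀ k, lam k ∈ Set.Icc (0 : ℝ) 2) (h0 : x 0 ≠ 0)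
    (hsmall : ∀ k < n, relDist (V (i k)) (x k) < 1 / 2) : x n ≠ 0 := by
  induction n with
  | zero => exact h0
  | succ n ih =>
    rw [hx]
    exact relaxProj_ne_zero (hlam n) (ih fun k hk => hsmall k (by omega)) (hsmall n n.lt_succ_self)

variable [DecidableEq ι]

-- `visited i k` is the index set `I_k = {i_0, …, i_k}`.
def visited (i : ℕ → ι) (k : ℕ) : Finset ι := (Finset.range (k + 1)).image i

theorem visited_zero : visited i 0 = {i 0} := rfl

theorem visited_succ (k : ℕ) : visited i (k + 1) = insert (i (k + 1)) (visited i k) := by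
  rw [visited, Finset.range_add_one, Finset.image_insert, visited]

theorem mem_visited {j k : ℕ} (hjk : j ≤ k) : i j ∈ visited i k :=
  Finset.mem_image_of_mem i (Finset.mem_range.mpr (Nat.lt_succ_of_le hjk))

theorem mul_relDist_visited_le [CompleteSpace H]
    (hx : ∀ k, x (k + 1) = relaxProj (V (i k)) (lam k) (x k))
    (hlam : ∀ k, lam k ∈ Set.Icc (0 : ℝ) 2) {κ ε : ℝ} (hκ : 1 ≤ κ) (hε : 0 ≤ ε)
    (hreg : ∀ (j : ι) (I : Finset ι) (y : H),
      relDist (V j ⊓ ⨅ j' ∈ I, V j') y ≤ κ * max (relDist (V j) y) (relDist (⨅ j' ∈ I, V j') y))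
    (hsmall : ∀ k ≤ n, relDist (V (i k)) (x k) ≤ ε) :
    κ * relDist (⨅ j ∈ visited i n, V j) (x n) ≤ κ ^ (visited i n).card * ε := by
  have hκ0 : 0 ≤ κ := zero_le_one.trans hκ
  induction n with
  | zero =>
    rw [visited_zero, Finset.iInf_singleton, Finset.card_singleton, pow_one]
    exact mul_le_mul_of_nonneg_left (hsmall 0 le_rfl) hκ0
  | succ n ih =>
    have ih := ih fun k hk => hsmall k (by omega)
    have hstep : κ * relDist (⨅ j ∈ visited i n, V j) (x (n + 1)) ≤ κ ^ (visited i n).card * ε := by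
      refine le_trans (mul_le_mul_of_nonneg_left ?_ hκ0) ih
      rw [hx]
      exact relDist_relaxProj_le (biInf_le _ (mem_visited le_rfl)) (hlam n) (x n)
    rw [visited_succ]
    by_cases hnew : i (n + 1) ∈ visited i n
    · rwa [Finset.insert_eq_of_mem hnew]
    have hκc : κ ≤ κ ^ (visited i n).card :=
      le_self_pow₀ hκ (Finset.card_pos.mpr ⟨_, mem_visited (le_refl n)⟩).ne'
    rw [Finset.iInf_insert, Finset.card_insert_of_notMem hnew, pow_succ]
    calc κ * relDist (V (i (n + 1)) ⊓ ⨅ j ∈ visited i n, V j) (x (n + 1))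
        ≤ κ * (κ * max (relDist (V (i (n + 1))) (x (n + 1)))
            (relDist (⨅ j ∈ visited i n, V j) (x (n + 1)))) :=
          mul_le_mul_of_nonneg_left (hreg _ _ _) hκ0
      _ = κ * max (κ * relDist (V (i (n + 1))) (x (n + 1)))
            (κ * relDist (⨅ j ∈ visited i n, V j) (x (n + 1))) := by
          rw [mul_max_of_nonneg _ _ hκ0]
      _ ≤ κ * (κ ^ (visited i n).card * ε) := by
          refine mul_le_mul_of_nonneg_left (max_le ?_ hstep) hκ0
          exact (mul_le_mul_of_nonneg_left (hsmall _ le_rfl) hκ0).trans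
            (mul_le_mul_of_nonneg_right hκc hε)
      _ = κ ^ (visited i n).card * κ * ε := by ring

end Trajectory

theorem stmt_15_general {H : Type*} [NormedAddCommGroup H] [InnerProductSpace ℝ H] [CompleteSpace H]
    (N : ℕ) (V : Fin N → Submodule ℝ H) [∀ i, CompleteSpace (V i)]
    (κ : ℝ) (hκ : 2 ≤ κ)
    (hreg : ∀ (I J : Finset (Fin N)) (x : H),
      infDist x ((((⨅ i ∈ I, V i) ⊓ ⨅ j ∈ J, V j) : Submodule ℝ H) : Set H) ≤
        κ * max (infDist x ((⨅ i ∈ I, V i : Submodule ℝ H) : Set H))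
                (infDist x ((⨅ j ∈ J, V j : Submodule ℝ H) : Set H)))
    (i : ℕ → Fin N) (lam : ℕ → ℝ) (hlam : ∀ n, lam n ∈ Set.Icc (0 : ℝ) 2)
    (x : ℕ → H) (hx : ∀ n, x (n + 1) = relaxProj (V (i n)) (lam n) (x n))
    (n : ℕ) (ε : ℝ) (hε0 : 0 ≤ ε)
    (hεκ : ε < (κ ^ ((Finset.range (n + 1)).image i).card)⁻¹)
    (hsmall : ∀ k, k ≤ n → relDist (V (i k)) (x k) ≤ ε) :
    x 0 = 0 ∨ x 0 ∉ ((⨅ j ∈ (Finset.range (n + 1)).image i, V j : Submodule ℝ H))ᗮ := by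
  refine or_iff_not_imp_left.mpr fun h0 hW => ?_
  change x 0 ∈ (⨅ j ∈ visited i n, V j)ᗮ at hW
  change ε < (κ ^ (visited i n).card)⁻¹ at hεκ
  have hκc : κ ≤ κ ^ (visited i n).card :=
    le_self_pow₀ (by linarith) (Finset.card_pos.mpr ⟨_, mem_visited (le_refl n)⟩).ne'
  have hpos : 0 < κ ^ (visited i n).card := by linarith
  have hεκc : κ ^ (visited i n).card * ε < 1 := by
    simpa [hpos.ne'] using mul_lt_mul_of_pos_left hεκ hpos
  have hne : x n ≠ 0 := trajectory_ne_zero hx hlam h0 fun k hk =>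
    (hsmall k hk.le).trans_lt (hεκ.trans_le (by simpa using inv_anti₀ two_pos (hκ.trans hκc)))
  have horth : x n ∈ (⨅ j ∈ visited i n, V j)ᗮ :=
    trajectory_mem_orthogonal hx (fun k hk => biInf_le _ (mem_visited hk.le)) hW
  have hregRel (j : Fin N) (I : Finset (Fin N)) (y : H) :
      relDist (V j ⊓ ⨅ j' ∈ I, V j') y ≤
        κ * max (relDist (V j) y) (relDist (⨅ j' ∈ I, V j') y) := by
    simpa only [Finset.iInf_singleton] using relDist_inf_le (by linarith) (hreg {j} I y)
  have hbound := mul_relDist_visited_le hx hlam (by linarith) hε0 hregRel hsmall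
  rw [relDist_eq_one_of_mem_orthogonal horth hne, mul_one] at hbound
  linarith

/-- if all relative distances along the trajectory up to time `n` are at most
`ε < κ^{−|I_n|}`, then either `x_0 = 0` or `x_0 ∉ (V_{I_n})^⊥`. -/
theorem stmt_15 {H : Type*} [NormedAddCommGroup H] [InnerProductSpace ℝ H] [CompleteSpace H]
    (N : ℕ) (hN : 1 ≤ N) (V : Fin N → Submodule ℝ H) [∀ i, CompleteSpace (V i)]
    (κ : ℝ) (hκ : 2 ≤ κ)
    (hreg : ∀ (I J : Finset (Fin N)) (x : H),
      infDist x ((((⨅ i ∈ I, V i) ⊓ ⨅ j ∈ J, V j) : Submodule ℝ H) : Set H) ≤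
        κ * max (infDist x ((⨅ i ∈ I, V i : Submodule ℝ H) : Set H))
                (infDist x ((⨅ j ∈ J, V j : Submodule ℝ H) : Set H)))
    (i : ℕ → Fin N) (lam : ℕ → ℝ) (hlam : ∀ n, lam n ∈ Set.Icc (0 : ℝ) 2)
    (x : ℕ → H) (hx : ∀ n, x (n + 1) = relaxProj (V (i n)) (lam n) (x n))
    (n : ℕ) (ε : ℝ) (hε0 : 0 ≤ ε)
    (hεκ : ε < (κ ^ ((Finset.range (n + 1)).image i).card)⁻¹)
    (hsmall : ∀ k, k ≤ n → relDist (V (i k)) (x k) ≤ ε) :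
    x 0 = 0 ∨ x 0 ∉ ((⨅ j ∈ (Finset.range (n + 1)).image i, V j : Submodule ℝ H))ᗮ :=
  stmt_15_general N V κ hκ hreg i lam hlam x hx n ε hε0 hεκ hsmall
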